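/- Suppose the game is a constrained dynamic potential game with potential (P, R) (the exact potential condition holds for all feasible unilateral deviations), the functions P(·,·,k), R, f^i(·,·,k), and g(·,·,k) are continuous, and the set of feasible strategy profiles is nonempty and compact (as a subset of (ℝ^m)^T). Then the game admits a generalized Nash equilibrium: there exists a feasible profile γ* such that for every agent i and every strategy ν^i of agent i with (ν^i, γ^{-i*}) feasible, J^i(x_0, γ*) ≤ J^i(x_0, (ν^i, γ^{-i*})). -/

import Mathlib

/-!
A minimiser of the potential over the feasible set is a generalized Nash equilibrium: a feasible
unilateral deviation of agent `i` changes `J^i` by exactly as much as it changes the potential,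
which cannot decrease. Such a minimiser exists because the trajectory, hence the potential, depends
continuously on the profile and the feasible set is compact and nonempty.
-/

/-- Past the horizon the action is taken to be `0`; only the values for `k ≤ T` matter. -/
noncomputable def traj {N T : ℕ} {n m : Fin N → ℕ}
    (f : ∀ i : Fin N, (Fin (n i) → ℝ) → (Fin (m i) → ℝ) → ℕ → (Fin (n i) → ℝ))
    (x0 : ∀ i, Fin (n i) → ℝ) (γ : ∀ i, Fin T → Fin (m i) → ℝ) :
    ℕ → ∀ i, Fin (n i) → ℝ
  | 0 => x0
  | (k + 1) => fun i =>
      f i (traj f x0 γ k i) (if h : k < T then γ i ⟨k, h⟩ else 0) k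

def Feasible {N T c : ℕ} {n m : Fin N → ℕ}
    (f : ∀ i : Fin N, (Fin (n i) → ℝ) → (Fin (m i) → ℝ) → ℕ → (Fin (n i) → ℝ))
    (x0 : ∀ i, Fin (n i) → ℝ)
    (g : (∀ j, Fin (n j) → ℝ) → (∀ j, Fin (m j) → ℝ) → ℕ → Fin c → ℝ)
    (gT : (∀ j, Fin (n j) → ℝ) → Fin c → ℝ)
    (γ : ∀ j, Fin T → Fin (m j) → ℝ) : Prop :=
  (∀ (k : Fin T) (l : Fin c),
      g (traj f x0 γ k) (fun j => γ j k) (k : ℕ) l ≤ 0) ∧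
    (∀ l : Fin c, gT (traj f x0 γ T) l ≤ 0)

/-- `J^i(x_0,γ) = S^i(x^i_T) + ∑_{k<T} L^i(x_k, u_k, k)`. -/
noncomputable def agentCost {N T : ℕ} {n m : Fin N → ℕ}
    (f : ∀ i : Fin N, (Fin (n i) → ℝ) → (Fin (m i) → ℝ) → ℕ → (Fin (n i) → ℝ))
    (x0 : ∀ i, Fin (n i) → ℝ)
    (L : ∀ _ : Fin N, (∀ j, Fin (n j) → ℝ) → (∀ j, Fin (m j) → ℝ) → ℕ → ℝ)
    (S : ∀ i : Fin N, (Fin (n i) → ℝ) → ℝ)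
    (i : Fin N) (γ : ∀ j, Fin T → Fin (m j) → ℝ) : ℝ :=
  S i (traj f x0 γ T i) +
    ∑ k : Fin T, L i (traj f x0 γ k) (fun j => γ j k) (k : ℕ)

/-- `J(x_0,γ) = R(x_T) + ∑_{k<T} P(x_k,u_k,k)`. -/
noncomputable def potCost {N T : ℕ} {n m : Fin N → ℕ}
    (f : ∀ i : Fin N, (Fin (n i) → ℝ) → (Fin (m i) → ℝ) → ℕ → (Fin (n i) → ℝ))
    (x0 : ∀ i, Fin (n i) → ℝ)
    (P : (∀ j, Fin (n j) → ℝ) → (∀ j, Fin (m j) → ℝ) → ℕ → ℝ)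
    (R : (∀ j, Fin (n j) → ℝ) → ℝ)
    (γ : ∀ j, Fin T → Fin (m j) → ℝ) : ℝ :=
  R (traj f x0 γ T) +
    ∑ k : Fin T, P (traj f x0 γ k) (fun j => γ j k) (k : ℕ)

section AbstractGame

variable {ι : Type*} [DecidableEq ι] {X : ι → Type*}

def IsExactPotential (F : Set (∀ i, X i)) (J : ι → (∀ i, X i) → ℝ) (Φ : (∀ i, X i) → ℝ) :
    Prop :=
  ∀ i γ (ν : X i), γ ∈ F → Function.update γ i ν ∈ F →
    J i γ - J i (Function.update γ i ν) = Φ γ - Φ (Function.update γ i ν)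

def IsGeneralizedNashEquilibrium (F : Set (∀ i, X i)) (J : ι → (∀ i, X i) → ℝ)
    (γ : ∀ i, X i) : Prop :=
  γ ∈ F ∧ ∀ i (ν : X i), Function.update γ i ν ∈ F → J i γ ≤ J i (Function.update γ i ν)

theorem IsExactPotential.isGeneralizedNashEquilibrium_of_isMinOn {F : Set (∀ i, X i)}
    {J : ι → (∀ i, X i) → ℝ} {Φ : (∀ i, X i) → ℝ} {γ : ∀ i, X i}
    (hΦ : IsExactPotential F J Φ) (hγ : γ ∈ F) (hmin : IsMinOn Φ F γ) :
    IsGeneralizedNashEquilibrium F J γ := by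
  refine ⟨hγ, fun i ν hν => ?_⟩
  have hpot := hΦ i γ ν hγ hν
  have hle : Φ γ ≤ Φ (Function.update γ i ν) := hmin hν
  linarith

variable [∀ i, TopologicalSpace (X i)]

theorem IsExactPotential.exists_isGeneralizedNashEquilibrium {F : Set (∀ i, X i)}
    {J : ι → (∀ i, X i) → ℝ} {Φ : (∀ i, X i) → ℝ} (hΦ : IsExactPotential F J Φ)
    (hF : IsCompact F) (hne : F.Nonempty) (hcont : ContinuousOn Φ F) :
    ∃ γ, IsGeneralizedNashEquilibrium F J γ :=
  let ⟨γ, hγ, hmin⟩ := hF.exists_isMinOn hne hcont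
  ⟨γ, hΦ.isGeneralizedNashEquilibrium_of_isMinOn hγ hmin⟩

end AbstractGame

section Trajectory

variable {N T : ℕ} {n m : Fin N → ℕ}
  {f : ∀ i : Fin N, (Fin (n i) → ℝ) → (Fin (m i) → ℝ) → ℕ → (Fin (n i) → ℝ)}

theorem continuous_traj (x0 : ∀ i, Fin (n i) → ℝ)
    (hf : ∀ i, ∀ k < T, Continuous (fun p : (Fin (n i) → ℝ) × (Fin (m i) → ℝ) => f i p.1 p.2 k))
    {k : ℕ} (hk : k ≤ T) :
    Continuous (fun γ : ∀ j, Fin T → Fin (m j) → ℝ => traj f x0 γ k) := by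
  induction k with
  | zero => exact continuous_const
  | succ k ih =>
    have hkT : k < T := hk
    refine continuous_pi fun i => ?_
    simp only [traj, hkT, dite_true]
    exact (hf i k hkT).comp
      (((continuous_apply i).comp (ih hkT.le)).prodMk
        ((continuous_apply _).comp (continuous_apply i)))

theorem continuous_potCost (x0 : ∀ i, Fin (n i) → ℝ)
    {P : (∀ j, Fin (n j) → ℝ) → (∀ j, Fin (m j) → ℝ) → ℕ → ℝ} {R : (∀ j, Fin (n j) → ℝ) → ℝ}
    (hf : ∀ i, ∀ k < T, Continuous (fun p : (Fin (n i) → ℝ) × (Fin (m i) → ℝ) => f i p.1 p.2 k))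
    (hP : ∀ k < T, Continuous
      (fun p : (∀ j, Fin (n j) → ℝ) × (∀ j, Fin (m j) → ℝ) => P p.1 p.2 k))
    (hR : Continuous R) :
    Continuous (potCost (T := T) f x0 P R) := by
  refine (hR.comp (continuous_traj x0 hf le_rfl)).add (continuous_finsetSum _ fun k _ => ?_)
  have hu : Continuous (fun γ : ∀ j, Fin T → Fin (m j) → ℝ => fun j => γ j k) :=
    continuous_pi fun j => (continuous_apply k).comp (continuous_apply j)
  exact (hP k k.isLt).comp ((continuous_traj x0 hf k.isLt.le).prodMk hu)

end Trajectory

theorem potential_game_GNE_exists_general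
    {N T c : ℕ} (n m : Fin N → ℕ)
    (f : ∀ i : Fin N, (Fin (n i) → ℝ) → (Fin (m i) → ℝ) → ℕ → (Fin (n i) → ℝ))
    (x0 : ∀ i, Fin (n i) → ℝ)
    (L : ∀ _ : Fin N, (∀ j, Fin (n j) → ℝ) → (∀ j, Fin (m j) → ℝ) → ℕ → ℝ)
    (S : ∀ i : Fin N, (Fin (n i) → ℝ) → ℝ)
    (P : (∀ j, Fin (n j) → ℝ) → (∀ j, Fin (m j) → ℝ) → ℕ → ℝ)
    (R : (∀ j, Fin (n j) → ℝ) → ℝ)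
    (g : (∀ j, Fin (n j) → ℝ) → (∀ j, Fin (m j) → ℝ) → ℕ → Fin c → ℝ)
    (gT : (∀ j, Fin (n j) → ℝ) → Fin c → ℝ)
    (hpot : ∀ (i : Fin N) (γ : ∀ j, Fin T → Fin (m j) → ℝ) (ν : Fin T → Fin (m i) → ℝ),
      Feasible f x0 g gT γ → Feasible f x0 g gT (Function.update γ i ν) →
      agentCost f x0 L S i γ - agentCost f x0 L S i (Function.update γ i ν)
        = potCost f x0 P R γ - potCost f x0 P R (Function.update γ i ν))
    (hPcont : ∀ k < T, Continuous
      (fun p : (∀ j, Fin (n j) → ℝ) × (∀ j, Fin (m j) → ℝ) => P p.1 p.2 k))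
    (hRcont : Continuous R)
    (hfcont : ∀ (i : Fin N), ∀ k < T, Continuous
      (fun p : (Fin (n i) → ℝ) × (Fin (m i) → ℝ) => f i p.1 p.2 k))
    (hne : {γ : ∀ j, Fin T → Fin (m j) → ℝ | Feasible f x0 g gT γ}.Nonempty)
    (hcompact : IsCompact {γ : ∀ j, Fin T → Fin (m j) → ℝ | Feasible f x0 g gT γ}) :
    ∃ γStar : ∀ j, Fin T → Fin (m j) → ℝ, Feasible f x0 g gT γStar ∧
      ∀ (i : Fin N) (ν : Fin T → Fin (m i) → ℝ),
        Feasible f x0 g gT (Function.update γStar i ν) →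
        agentCost f x0 L S i γStar ≤ agentCost f x0 L S i (Function.update γStar i ν) := by
  have hΦ : IsExactPotential {γ | Feasible f x0 g gT γ} (agentCost f x0 L S) (potCost f x0 P R) :=
    hpot
  exact hΦ.exists_isGeneralizedNashEquilibrium hcompact hne
    (continuous_potCost x0 hfcont hPcont hRcont).continuousOn

/-- If the game is a constrained dynamic potential game
with potential `(P, R)` (the exact potential identity holds for all feasible
unilateral deviations), the functions `P(·,·,k)`, `R`, `f^i(·,·,k)`,
`g(·,·,k)` and the terminal constraint `gT` are continuous, and the set of
feasible strategy profiles is nonempty and compact, then the game admits a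
generalized Nash equilibrium. -/
theorem potential_game_GNE_exists
    {N T c : ℕ} (n m : Fin N → ℕ)
    (f : ∀ i : Fin N, (Fin (n i) → ℝ) → (Fin (m i) → ℝ) → ℕ → (Fin (n i) → ℝ))
    (x0 : ∀ i, Fin (n i) → ℝ)
    (L : ∀ _ : Fin N, (∀ j, Fin (n j) → ℝ) → (∀ j, Fin (m j) → ℝ) → ℕ → ℝ)
    (S : ∀ i : Fin N, (Fin (n i) → ℝ) → ℝ)
    (P : (∀ j, Fin (n j) → ℝ) → (∀ j, Fin (m j) → ℝ) → ℕ → ℝ)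
    (R : (∀ j, Fin (n j) → ℝ) → ℝ)
    (g : (∀ j, Fin (n j) → ℝ) → (∀ j, Fin (m j) → ℝ) → ℕ → Fin c → ℝ)
    (gT : (∀ j, Fin (n j) → ℝ) → Fin c → ℝ)
    (hpot : ∀ (i : Fin N) (γ : ∀ j, Fin T → Fin (m j) → ℝ) (ν : Fin T → Fin (m i) → ℝ),
      Feasible f x0 g gT γ → Feasible f x0 g gT (Function.update γ i ν) →
      agentCost f x0 L S i γ - agentCost f x0 L S i (Function.update γ i ν)
        = potCost f x0 P R γ - potCost f x0 P R (Function.update γ i ν))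
    (hPcont : ∀ k < T, Continuous
      (fun p : (∀ j, Fin (n j) → ℝ) × (∀ j, Fin (m j) → ℝ) => P p.1 p.2 k))
    (hRcont : Continuous R)
    (hfcont : ∀ (i : Fin N), ∀ k < T, Continuous
      (fun p : (Fin (n i) → ℝ) × (Fin (m i) → ℝ) => f i p.1 p.2 k))
    (hgcont : ∀ k < T, Continuous
      (fun p : (∀ j, Fin (n j) → ℝ) × (∀ j, Fin (m j) → ℝ) => g p.1 p.2 k))
    (hgTcont : Continuous gT)
    (hne : {γ : ∀ j, Fin T → Fin (m j) → ℝ | Feasible f x0 g gT γ}.Nonempty)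
    (hcompact : IsCompact {γ : ∀ j, Fin T → Fin (m j) → ℝ | Feasible f x0 g gT γ}) :
    ∃ γStar : ∀ j, Fin T → Fin (m j) → ℝ, Feasible f x0 g gT γStar ∧
      ∀ (i : Fin N) (ν : Fin T → Fin (m i) → ℝ),
        Feasible f x0 g gT (Function.update γStar i ν) →
        agentCost f x0 L S i γStar ≤ agentCost f x0 L S i (Function.update γStar i ν) :=
  potential_game_GNE_exists_general n m f x0 L S P R g gT hpot hPcont hRcont hfcont hne hcompact
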